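/- arXiv:1911.07235 — 4 statements merged into one kernel-verified Lean document; each statement's English description precedes it below -/
import Mathlib

section
/- Let x = X^ζ w̃ ∈ W be of positive level. If the positive double affine root α = ν + rδ + jπ (with ν ∈ Φ_fin, r, j ∈ ℤ) is a corner of the lower graph Γ_{x,fin(α)}, then one of the following holds: j = 0, or j = 1, or j = −⟨ζ, ν + rδ⟩, or j = −⟨ζ, ν + rδ⟩ − 1. -/
/-!
Common framework for the double affine Weyl semigroup of Welch,
"Double Affine Bruhat Order".

Encoding conventions:
* `P` is the finite weight lattice `P_fin` (an additive abelian group) equipped with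
  an integer-valued pairing `pair` (the normalized simply-laced pairing, identifying
  roots and coroots).
* A finite root is an element of the set `Φfin ⊆ P`; `finPos` is the set of
  positive finite roots.
* An affine root `ν + rδ` is encoded as the pair `(ν, r) : P × ℤ`.
* An affine weight `ζ = μ + mδ + lΛ₀ ∈ X` is encoded as `(μ, m, l) : P × ℤ × ℤ`.
* A double affine root `ν + rδ + jπ` is encoded as `(ν, r, j) : P × ℤ × ℤ`.
* `G` is the affine Weyl group `W_aff` (an abstract group), acting on affine
  roots via `ract` and on `X` via `xact`; `saff α̃` is the reflection `s_{α̃}`,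
  `Ytr λ` is the translation `Y^λ`.
* An element `X^ζ w̃` of the group `X ⋊ W_aff` (in particular of the double affine
  Weyl semigroup `W`, whose elements are those with `ζ` in the Tits cone) is encoded
  as the pair `(ζ, w̃) : (P × ℤ × ℤ) × G`.
-/

namespace DoubleAffineBruhat

/-- Positivity of an affine root `ν + rδ`, encoded as the pair `(ν, r)`:
`ν + rδ > 0` iff `r > 0`, or `r = 0` and `ν` is a positive finite root. -/
def aPos {P : Type} (finPos : Set P) (a : P × ℤ) : Prop :=
  0 < a.2 ∨ (a.2 = 0 ∧ a.1 ∈ finPos)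

/-- The pairing of an affine weight `ζ = μ + mδ + lΛ₀`, encoded as `(μ, m, l)`,
with an affine root `ν + rδ`, encoded as `(ν, r)`:
`⟨ζ, ν + rδ⟩ = ⟨μ, ν⟩ + l·r`. -/
def xpair {P : Type} (pair : P → P → ℤ) (ζ : P × ℤ × ℤ) (a : P × ℤ) : ℤ :=
  pair ζ.1 a.1 + ζ.2.2 * a.2

/-- The level of an affine weight. -/
def level {P : Type} (ζ : P × ℤ × ℤ) : ℤ := ζ.2.2

/-- The Tits cone `𝒯 = {mδ : m ∈ ℤ} ∪ {μ + mδ + lΛ₀ : l > 0}`. -/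
def Tits (P : Type) [AddCommGroup P] : Set (P × ℤ × ℤ) :=
  {ζ | (ζ.1 = 0 ∧ ζ.2.2 = 0) ∨ 0 < ζ.2.2}

/-- Positivity of a double affine root `α = α̃ + jπ` encoded as `(ν, r, j)`
(with `α̃ = ν + rδ`): positive iff (`α̃ > 0` and `j ≥ 0`) or (`α̃ < 0` and `j > 0`). -/
def dPos {P : Type} [AddCommGroup P] (finPos : Set P) (a : P × ℤ × ℤ) : Prop :=
  (aPos finPos (a.1, a.2.1) ∧ 0 ≤ a.2.2) ∨ (aPos finPos (-a.1, -a.2.1) ∧ 0 < a.2.2)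

variable {P G : Type} [AddCommGroup P] [Group G]

/-- Multiplication in the group `X ⋊ W_aff`:
`(X^ζ g)(X^η h) = X^{ζ + gη} (gh)`, where `xact` is the action of `W_aff` on `X`. -/
def dwmul (xact : G → P × ℤ × ℤ → P × ℤ × ℤ) (x y : (P × ℤ × ℤ) × G) :
    (P × ℤ × ℤ) × G :=
  (x.1 + xact x.2 y.1, x.2 * y.2)

/-- Inversion in the group `X ⋊ W_aff`: `(X^ζ g)⁻¹ = X^{-g⁻¹ζ} g⁻¹`. -/
def dwinv (xact : G → P × ℤ × ℤ → P × ℤ × ℤ) (x : (P × ℤ × ℤ) × G) :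
    (P × ℤ × ℤ) × G :=
  (-(xact x.2⁻¹ x.1), x.2⁻¹)

/-- Action of `X^ζ g ∈ X ⋊ W_aff` on double affine roots:
`X^ζ g (α̃ + jπ) = g(α̃) + (j - ⟨ζ, g(α̃)⟩)π`, where `ract` is the action of
`W_aff` on affine roots. -/
def dact (pair : P → P → ℤ) (ract : G → P × ℤ → P × ℤ)
    (x : (P × ℤ × ℤ) × G) (a : P × ℤ × ℤ) : P × ℤ × ℤ :=
  ((ract x.2 (a.1, a.2.1)).1, (ract x.2 (a.1, a.2.1)).2,
    a.2.2 - xpair pair x.1 (ract x.2 (a.1, a.2.1)))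

/-- The reflection `s_α = X^{-j(ν + rδ)} s_{ν + rδ} ∈ X ⋊ W_aff` associated to the
double affine root `α = ν + rδ + jπ`. -/
def dref (saff : P × ℤ → G) (a : P × ℤ × ℤ) : (P × ℤ × ℤ) × G :=
  ((-a.2.2 • a.1, -(a.2.2 * a.2.1), 0), saff (a.1, a.2.1))

/-- All the data of the double affine setting together with the structural facts
that hold in it (context facts; `Φ_fin` irreducible and simply laced, normalized
pairing, Coxeter facts for `W_aff`, etc.). -/
structure Ctx (P G : Type) [AddCommGroup P] [Group G] where
  /-- the normalized pairing on the finite weight lattice -/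
  pair : P → P → ℤ
  /-- the set of finite roots `Φ_fin` -/
  Φfin : Set P
  /-- the set of positive finite roots -/
  finPos : Set P
  /-- the number of finite simple roots (the affine simple roots are `α_0, …, α_n`) -/
  n : ℕ
  /-- the affine simple roots `α_0, …, α_n` -/
  simple : Fin (n + 1) → P × ℤ
  /-- the action of `W_aff` on affine roots -/
  ract : G → P × ℤ → P × ℤ
  /-- the action of `W_aff` on the affine weight lattice `X` -/
  xact : G → P × ℤ × ℤ → P × ℤ × ℤ
  /-- the reflection `s_{α̃} ∈ W_aff` of an affine root `α̃` -/
  saff : P × ℤ → G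
  /-- the translation `Y^λ ∈ W_aff` -/
  Ytr : P → G
  /-- the linear functional `⟨·, 2ρ⟩`, `ρ` the sum of the affine fundamental weights;
  an affine root `ν + rδ` is paired as the weight `(ν, r, 0)` -/
  rho2 : P × ℤ × ℤ → ℤ
  /-- `ζ ↦ ζ₊`, the dominant representative of the `W_aff`-orbit of `ζ` (for `ζ ∈ 𝒯`) -/
  domRep : P × ℤ × ℤ → P × ℤ × ℤ
  pair_add_left : ∀ μ ν γ, pair (μ + ν) γ = pair μ γ + pair ν γ
  pair_add_right : ∀ μ ν γ, pair μ (ν + γ) = pair μ ν + pair μ γ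
  pair_symm : ∀ μ ν, pair μ ν = pair ν μ
  pair_norm : ∀ ν ∈ Φfin, pair ν ν = 2
  pair_bound : ∀ ν ∈ Φfin, ∀ γ ∈ Φfin, pair ν γ ≤ 2
  pair_two_eq : ∀ ν ∈ Φfin, ∀ γ ∈ Φfin, pair ν γ = 2 → ν = γ
  root_neg : ∀ ν ∈ Φfin, -ν ∈ Φfin
  pos_trichotomy : ∀ ν ∈ Φfin, (ν ∈ finPos ↔ ¬(-ν ∈ finPos))
  simple_root : ∀ i, (simple i).1 ∈ Φfin
  simple_pos : ∀ i, aPos finPos (simple i)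
  ract_one : ∀ a, ract 1 a = a
  ract_mul : ∀ g h a, ract (g * h) a = ract g (ract h a)
  ract_neg : ∀ g a, ract g (-a) = -(ract g a)
  ract_root : ∀ g (a : P × ℤ), a.1 ∈ Φfin → (ract g a).1 ∈ Φfin
  xact_one : ∀ ζ, xact 1 ζ = ζ
  xact_mul : ∀ g h ζ, xact (g * h) ζ = xact g (xact h ζ)
  xact_add : ∀ g ζ η, xact g (ζ + η) = xact g ζ + xact g η
  xact_level : ∀ g ζ, (xact g ζ).2.2 = ζ.2.2
  xact_pair : ∀ g ζ a, xpair pair (xact g ζ) (ract g a) = xpair pair ζ a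
  saff_act : ∀ (ν : P) (r : ℤ) (γ : P) (p : ℤ),
    ract (saff (ν, r)) (γ, p) = (γ - pair ν γ • ν, p - r * pair ν γ)
  saff_invol : ∀ a : P × ℤ, saff a * saff a = 1
  saff_neg : ∀ a : P × ℤ, saff (-a) = saff a
  Ytr_act : ∀ (lam ν : P) (r : ℤ), ract (Ytr lam) (ν, r) = (ν, r - pair lam ν)
  decomp : ∀ g : G, ∃ (lam : P) (wf : G), g = Ytr lam * wf ∧
    ∀ (ν : P) (r : ℤ), ract wf (ν, r) = ((ract wf (ν, 0)).1, r)
  invFin : ∀ g : G,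
    {a : P × ℤ | a.1 ∈ Φfin ∧ aPos finPos a ∧ aPos finPos (-(ract g a))}.Finite
  domRep_mem : ∀ ζ : P × ℤ × ℤ, ζ ∈ Tits P → ∃ g : G, xact g ζ = domRep ζ
  domRep_dom : ∀ ζ : P × ℤ × ℤ, ζ ∈ Tits P → ∀ i, 0 ≤ xpair pair (domRep ζ) (simple i)
  domRep_eq : ∀ ζ : P × ℤ × ℤ, ζ ∈ Tits P →
    ∀ g : G, (∀ i, 0 ≤ xpair pair (xact g ζ) (simple i)) → xact g ζ = domRep ζ
  rho2_add : ∀ ζ η, rho2 (ζ + η) = rho2 ζ + rho2 η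
  rho2_simple : ∀ i, rho2 ((simple i).1, (simple i).2, 0) = 2

/-- The inversion set `Inv(g) = {α̃ ∈ Φ_aff : α̃ > 0, g(α̃) < 0}`. -/
def InvA (C : Ctx P G) (g : G) : Set (P × ℤ) :=
  {a | a.1 ∈ C.Φfin ∧ aPos C.finPos a ∧ aPos C.finPos (-(C.ract g a))}

/-- The Coxeter length of `g ∈ W_aff`, via `ℓ(g) = |Inv(g)|`. -/
noncomputable def alen (C : Ctx P G) (g : G) : ℤ := ((InvA C g).ncard : ℤ)

/-- `ζ ∈ X` is dominant: `⟨ζ, α_i⟩ ≥ 0` for all affine simple roots. -/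
def dominant (C : Ctx P G) (ζ : P × ℤ × ℤ) : Prop :=
  ∀ i, 0 ≤ xpair C.pair ζ (C.simple i)

/-- `ζ ∈ X` is regular: `⟨ζ, α̃⟩ ≠ 0` for all affine roots `α̃`. -/
def regular (C : Ctx P G) (ζ : P × ℤ × ℤ) : Prop :=
  ∀ a : P × ℤ, a.1 ∈ C.Φfin → xpair C.pair ζ a ≠ 0

/-- The length of `x = X^ζ w̃ ∈ W`:
`ℓ(x) = ⟨ζ₊, 2ρ⟩ + #{α̃ ∈ Inv(w̃⁻¹) : ⟨ζ, α̃⟩ ≤ 0} - #{α̃ ∈ Inv(w̃⁻¹) : ⟨ζ, α̃⟩ > 0}`. -/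
noncomputable def dlen (C : Ctx P G) (x : (P × ℤ × ℤ) × G) : ℤ :=
  C.rho2 (C.domRep x.1)
    + ((InvA C x.2⁻¹ ∩ {a | xpair C.pair x.1 a ≤ 0}).ncard : ℤ)
    - ((InvA C x.2⁻¹ ∩ {a | 0 < xpair C.pair x.1 a}).ncard : ℤ)

/-- One generating step of the double affine Bruhat order:
`bstep C x y` holds iff `x` has positive level and `y = s_α x` for some positive
double affine root `α` with `x⁻¹(α) < 0`. -/
def bstep (C : Ctx P G) (x y : (P × ℤ × ℤ) × G) : Prop :=
  0 < level x.1 ∧ ∃ a : P × ℤ × ℤ, a.1 ∈ C.Φfin ∧ dPos C.finPos a ∧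
    dPos C.finPos (-(dact C.pair C.ract (dwinv C.xact x) a)) ∧
    y = dwmul C.xact (dref C.saff a) x

/-- `bge C x y` means `x ≥ y` in the double affine Bruhat order (the order generated
by the relations `s_α x < x`). -/
def bge (C : Ctx P G) (x y : (P × ℤ × ℤ) × G) : Prop :=
  Relation.ReflTransGen (bstep C) x y

/-- `blt C y x` means `y < x` in the double affine Bruhat order. -/
def blt (C : Ctx P G) (y x : (P × ℤ × ℤ) × G) : Prop :=
  bge C x y ∧ y ≠ x

/-- `y` is a cocover of `x`: `y < x` and there is no `z` with `y < z < x`. -/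
def cocover (C : Ctx P G) (y x : (P × ℤ × ℤ) × G) : Prop :=
  blt C y x ∧ ¬∃ z : (P × ℤ × ℤ) × G, blt C y z ∧ blt C z x

/-- A double affine root `b` "corresponds to a point of the lower graph of `x`
(corresponding to `fin b`)": `b > 0` and `x⁻¹(b) < 0`. -/
def inGraph (C : Ctx P G) (x : (P × ℤ × ℤ) × G) (b : P × ℤ × ℤ) : Prop :=
  dPos C.finPos b ∧ dPos C.finPos (-(dact C.pair C.ract (dwinv C.xact x) b))

/-- The lower graph `Γ_{x,ν} = {(r,j) : ν + rδ + jπ > 0 and x⁻¹(ν + rδ + jπ) < 0}`. -/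
def Gamma (C : Ctx P G) (x : (P × ℤ × ℤ) × G) (ν : P) : Set (ℤ × ℤ) :=
  {rj | inGraph C x (ν, rj.1, rj.2)}

/-- `a` is a corner of the lower graph `Γ_{x, fin(a)}`. -/
def IsCorner (C : Ctx P G) (x : (P × ℤ × ℤ) × G) (a : P × ℤ × ℤ) : Prop :=
  inGraph C x a ∧
    ∀ b : P × ℤ × ℤ, b.1 = a.1 → b ≠ a → inGraph C x b →
      ¬ inGraph C x (-(dact C.pair C.ract (dref C.saff a) b))

/-- The length difference set
`L_{x,α} = {β ∈ Φ : β > 0, x⁻¹(β) < 0, s_α(β) < 0, x⁻¹ s_α(β) > 0}`. -/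
def Ldiff (C : Ctx P G) (x : (P × ℤ × ℤ) × G) (a : P × ℤ × ℤ) :
    Set (P × ℤ × ℤ) :=
  {b | b.1 ∈ C.Φfin ∧ dPos C.finPos b ∧
    dPos C.finPos (-(dact C.pair C.ract (dwinv C.xact x) b)) ∧
    dPos C.finPos (-(dact C.pair C.ract (dref C.saff a) b)) ∧
    dPos C.finPos (dact C.pair C.ract (dwinv C.xact x) (dact C.pair C.ract (dref C.saff a) b))}

lemma dPos.nonneg {finPos : Set P} {a : P × ℤ × ℤ} (h : dPos finPos a) : 0 ≤ a.2.2 := by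
  rcases h with ⟨-, h⟩ | ⟨-, h⟩ <;> omega

lemma dPos.of_one_le {finPos : Set P} {ν : P} {r j k : ℤ} (h : dPos finPos (ν, r, j))
    (hk : 1 ≤ k) : dPos finPos (ν, r, k) := by
  rcases h with ⟨h, -⟩ | ⟨h, -⟩
  · exact Or.inl ⟨h, by dsimp; omega⟩
  · exact Or.inr ⟨h, by dsimp; omega⟩

variable (C : Ctx P G)

lemma pair_neg_left (μ γ : P) : C.pair (-μ) γ = -C.pair μ γ :=
  (AddMonoidHom.mk' (C.pair · γ) (C.pair_add_left · · γ)).map_neg μ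

lemma pair_zsmul_left (z : ℤ) (μ γ : P) : C.pair (z • μ) γ = z * C.pair μ γ :=
  (AddMonoidHom.mk' (C.pair · γ) (C.pair_add_left · · γ)).map_zsmul z μ

lemma xpair_neg (η : P × ℤ × ℤ) (a : P × ℤ) :
    xpair C.pair (-η) a = -xpair C.pair η a := by
  simp only [xpair, Prod.fst_neg, Prod.snd_neg, pair_neg_left]
  ring

lemma dact_dwinv (ζ : P × ℤ × ℤ) (g : G) (ν : P) (r k : ℤ) :
    dact C.pair C.ract (dwinv C.xact (ζ, g)) (ν, r, k) =
      ((C.ract g⁻¹ (ν, r)).1, (C.ract g⁻¹ (ν, r)).2, k + xpair C.pair ζ (ν, r)) := by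
  simp only [dact, dwinv, xpair_neg, C.xact_pair, sub_neg_eq_add]

lemma dact_dref_self {ν : P} (hν : ν ∈ C.Φfin) (r j k : ℤ) :
    dact C.pair C.ract (dref C.saff (ν, r, j)) (ν, r, k) = (-ν, -r, k - 2 * j) := by
  have hνν : ν - (2 : ℤ) • ν = -ν := by rw [two_smul]; abel
  have hpair : C.pair ν (-ν) = -2 := by rw [C.pair_symm, pair_neg_left, C.pair_norm ν hν]
  simp only [dact, dref, C.saff_act, C.pair_norm ν hν, hνν, xpair, pair_zsmul_left, hpair,
    Prod.mk.injEq]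
  exact ⟨trivial, by ring, by ring⟩

lemma inGraph_of_one_le_of_add_xpair_le {ζ : P × ℤ × ℤ} {g : G} {ν : P} {r j : ℤ}
    (hα : inGraph C (ζ, g) (ν, r, j)) {k : ℤ} (hk : 1 ≤ k)
    (hkζ : k + xpair C.pair ζ (ν, r) ≤ -1) : inGraph C (ζ, g) (ν, r, k) := by
  obtain ⟨hpos, hneg⟩ := hα
  unfold inGraph
  rw [dact_dwinv, Prod.neg_mk, Prod.neg_mk] at hneg ⊢
  exact ⟨hpos.of_one_le hk, hneg.of_one_le (by omega)⟩

lemma nonneg_and_add_xpair_nonpos_of_inGraph {ζ : P × ℤ × ℤ} {g : G} {ν : P} {r j : ℤ}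
    (hα : inGraph C (ζ, g) (ν, r, j)) : 0 ≤ j ∧ j + xpair C.pair ζ (ν, r) ≤ 0 := by
  obtain ⟨hpos, hneg⟩ := hα
  rw [dact_dwinv] at hneg
  exact ⟨hpos.nonneg, by simpa only [Prod.neg_mk, neg_nonneg] using hneg.nonneg⟩

theorem statement4_general {P G : Type} [AddCommGroup P] [Group G] (C : Ctx P G)
    (ζ : P × ℤ × ℤ) (g : G)
    (x : (P × ℤ × ℤ) × G) (hx : x = (ζ, g))
    (ν : P) (r j : ℤ) (hν : ν ∈ C.Φfin)
    (hcorner : IsCorner C x (ν, r, j)) :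
    j = 0 ∨ j = 1 ∨ j = -(xpair C.pair ζ (ν, r)) ∨ j = -(xpair C.pair ζ (ν, r)) - 1 := by
  subst hx
  obtain ⟨hα, hcorner⟩ := hcorner
  obtain ⟨hj, hjζ⟩ := nonneg_and_add_xpair_nonpos_of_inGraph C hα
  by_contra! hne
  -- Away from the four boundary rows, `α - π` and `α + π = -s_α(α - π)` both lie in the graph.
  have hbelow := inGraph_of_one_le_of_add_xpair_le C hα (k := j - 1) (by omega) (by omega)
  have habove := inGraph_of_one_le_of_add_xpair_le C hα (k := j + 1) (by omega) (by omega)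
  refine hcorner (ν, r, j - 1) rfl (by simp) hbelow ?_
  rwa [dact_dref_self C hν, Prod.neg_mk, Prod.neg_mk, neg_neg, neg_neg,
    show -(j - 1 - 2 * j) = j + 1 by ring]

/-- Corollary `corner types`: a corner `α = ν + rδ + jπ` of the lower
graph `Γ_{x, fin(α)}` has `j ∈ {0, 1, -⟨ζ, ν + rδ⟩, -⟨ζ, ν + rδ⟩ - 1}`. -/
theorem statement4 {P G : Type} [AddCommGroup P] [Group G] (C : Ctx P G)
    (ζ : P × ℤ × ℤ) (g : G)
    (x : (P × ℤ × ℤ) × G) (hx : x = (ζ, g))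
    (hxW : ζ ∈ Tits P) (hxl : 0 < level ζ)
    (ν : P) (r j : ℤ) (hν : ν ∈ C.Φfin)
    (hpos : dPos C.finPos (ν, r, j))
    (hcorner : IsCorner C x (ν, r, j)) :
    j = 0 ∨ j = 1 ∨ j = -(xpair C.pair ζ (ν, r)) ∨ j = -(xpair C.pair ζ (ν, r)) - 1 :=
  statement4_general C ζ g x hx ν r j hν hcorner

end DoubleAffineBruhat
end

section
/- Fix x = X^ζ w̃ ∈ W with ζ = μ + mδ + lΛ_0 of positive level l and w̃ = Y^λ w (λ ∈ Q, w ∈ W_fin), and fix ν ∈ Φ_fin. Then (r,j) ∈ Γ_{x,ν} if and only if both of the following hold: (a) j > 0, or (j = 0 and r > 0), or (j = 0, r = 0 and ν > 0); and (b) j < −⟨μ,ν⟩ − lr, or (j = −⟨μ,ν⟩ − lr and r < −⟨λ,ν⟩), or (j = −⟨μ,ν⟩ − lr, r = −⟨λ,ν⟩ and w^{−1}(ν) < 0). In particular, the lower outer edge of Γ_{x,ν} consists of points (r,0) with 0 ≤ r ≤ ⟨ν,μ⟩/(−l), and the upper outer edge consists of points (r, −⟨μ,ν⟩ − lr) with r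 ≤ min{⟨ν,μ⟩/(−l), −⟨λ,ν⟩}. -/
/-!
Common framework for the double affine Weyl semigroup of Welch,
"Double Affine Bruhat Order".

Encoding conventions:
* `P` is the finite weight lattice `P_fin` (an additive abelian group) equipped with
  an integer-valued pairing `pair` (the normalized simply-laced pairing, identifying
  roots and coroots).
* A finite root is an element of the set `Φfin ⊆ P`; `finPos` is the set of
  positive finite roots.
* An affine root `ν + rδ` is encoded as the pair `(ν, r) : P × ℤ`.
* An affine weight `ζ = μ + mδ + lΛ₀ ∈ X` is encoded as `(μ, m, l) : P × ℤ × ℤ`.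
* A double affine root `ν + rδ + jπ` is encoded as `(ν, r, j) : P × ℤ × ℤ`.
* `G` is the affine Weyl group `W_aff` (an abstract group), acting on affine
  roots via `ract` and on `X` via `xact`; `saff α̃` is the reflection `s_{α̃}`,
  `Ytr λ` is the translation `Y^λ`.
* An element `X^ζ w̃` of the group `X ⋊ W_aff` (in particular of the double affine
  Weyl semigroup `W`, whose elements are those with `ζ` in the Tits cone) is encoded
  as the pair `(ζ, w̃) : (P × ℤ × ℤ) × G`.
-/

namespace DoubleAffineBruhat

variable {P G : Type} [AddCommGroup P] [Group G]

/-!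
`x⁻¹ = X^{-w̃⁻¹ζ} w̃⁻¹` sends `ν + rδ + jπ` to `w̃⁻¹(ν + rδ) + (j + ⟨ζ, ν + rδ⟩)π`, and for
`w̃ = Y^λ w` this is `w⁻¹ν + (r + ⟨λ, ν⟩)δ + (j + ⟨μ, ν⟩ + lr)π`. A double affine root
`ν + rδ + jπ` is positive exactly when `(j, r, ν)` is lexicographically positive, so both
conditions defining `Γ_{x,ν}` become lexicographic inequalities in `(j, r)`. The edge bounds
follow by specialising to `j = 0` and to `j = -⟨μ, ν⟩ - lr`.
-/

namespace Ctx

variable (C : Ctx P G)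

theorem pair_neg_left (μ γ : P) : C.pair (-μ) γ = -C.pair μ γ :=
  (AddMonoidHom.mk' (C.pair · γ) (C.pair_add_left · · γ)).map_neg μ

theorem xpair_neg_left (ζ : P × ℤ × ℤ) (a : P × ℤ) :
    xpair C.pair (-ζ) a = -xpair C.pair ζ a := by
  simp only [xpair, Prod.fst_neg, Prod.snd_neg, pair_neg_left]
  ring

theorem ract_inv_ract (g : G) (a : P × ℤ) : C.ract g⁻¹ (C.ract g a) = a := by
  rw [← C.ract_mul, inv_mul_cancel, C.ract_one]

theorem ract_ract_inv (g : G) (a : P × ℤ) : C.ract g (C.ract g⁻¹ a) = a := by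
  rw [← C.ract_mul, mul_inv_cancel, C.ract_one]

theorem ract_Ytr_inv (lam ν : P) (r : ℤ) :
    C.ract (C.Ytr lam)⁻¹ (ν, r) = (ν, r + C.pair lam ν) := by
  rw [← C.ract_inv_ract (C.Ytr lam) (ν, r + C.pair lam ν), C.Ytr_act, add_sub_cancel_right]

theorem ract_inv_of_fixes_delta {wf : G}
    (hwf : ∀ (ν : P) (r : ℤ), C.ract wf (ν, r) = ((C.ract wf (ν, 0)).1, r)) (ν : P) (r : ℤ) :
    C.ract wf⁻¹ (ν, r) = ((C.ract wf⁻¹ (ν, 0)).1, r) := by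
  set a := C.ract wf⁻¹ (ν, r)
  have ha : ((C.ract wf (a.1, 0)).1, a.2) = (ν, r) := by
    rw [← hwf]
    exact C.ract_ract_inv wf (ν, r)
  obtain ⟨h1, h2⟩ := Prod.mk.inj ha
  have h0 : C.ract wf⁻¹ (ν, 0) = (a.1, 0) := by
    rw [← C.ract_inv_ract wf (a.1, 0), hwf, h1]
  rw [h0]
  exact Prod.ext rfl h2

theorem ract_Ytr_mul_inv {lam : P} {wf : G}
    (hwf : ∀ (ν : P) (r : ℤ), C.ract wf (ν, r) = ((C.ract wf (ν, 0)).1, r)) (ν : P) (r : ℤ) :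
    C.ract (C.Ytr lam * wf)⁻¹ (ν, r) = ((C.ract wf⁻¹ (ν, 0)).1, r + C.pair lam ν) := by
  rw [mul_inv_rev, C.ract_mul, ract_Ytr_inv, C.ract_inv_of_fixes_delta hwf]

theorem dPos_iff {ν : P} (hν : ν ∈ C.Φfin) (r j : ℤ) :
    dPos C.finPos (ν, r, j) ↔ 0 < j ∨ (j = 0 ∧ 0 < r) ∨ (j = 0 ∧ r = 0 ∧ ν ∈ C.finPos) := by
  have hneg := C.pos_trichotomy ν hν
  simp only [dPos, aPos]
  by_cases hp : ν ∈ C.finPos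
  · have hnp : -ν ∉ C.finPos := hneg.mp hp
    simp only [hp, hnp, and_true, and_false, or_false]
    omega
  · have hnp : -ν ∈ C.finPos := not_not.mp (mt hneg.mpr hp)
    simp only [hp, hnp, and_true, and_false, or_false]
    omega

theorem dPos_neg_iff {ν : P} (hν : ν ∈ C.Φfin) (r j : ℤ) :
    dPos C.finPos (-(ν, r, j)) ↔ j < 0 ∨ (j = 0 ∧ r < 0) ∨ (j = 0 ∧ r = 0 ∧ -ν ∈ C.finPos) := by
  rw [Prod.neg_mk, Prod.neg_mk, C.dPos_iff (C.root_neg ν hν)]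
  simp only [Left.neg_pos_iff, neg_eq_zero]

theorem dact_dwinv (ζ : P × ℤ × ℤ) (g : G) (ν : P) (r j : ℤ) :
    dact C.pair C.ract (dwinv C.xact (ζ, g)) (ν, r, j) =
      ((C.ract g⁻¹ (ν, r)).1, (C.ract g⁻¹ (ν, r)).2, j + xpair C.pair ζ (ν, r)) := by
  simp only [dact, dwinv, xpair_neg_left, xact_pair, sub_neg_eq_add]

theorem mem_Gamma_iff (ζ : P × ℤ × ℤ) (g : G) {ν : P} (hν : ν ∈ C.Φfin) (r j : ℤ) :
    (r, j) ∈ Gamma C (ζ, g) ν ↔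
      (0 < j ∨ (j = 0 ∧ 0 < r) ∨ (j = 0 ∧ r = 0 ∧ ν ∈ C.finPos)) ∧
      (j + xpair C.pair ζ (ν, r) < 0 ∨
        (j + xpair C.pair ζ (ν, r) = 0 ∧ (C.ract g⁻¹ (ν, r)).2 < 0) ∨
        (j + xpair C.pair ζ (ν, r) = 0 ∧ (C.ract g⁻¹ (ν, r)).2 = 0 ∧
          -(C.ract g⁻¹ (ν, r)).1 ∈ C.finPos)) := by
  rw [Gamma, Set.mem_ofPred_eq, inGraph, dact_dwinv, C.dPos_iff hν,
    C.dPos_neg_iff (C.ract_root g⁻¹ (ν, r) hν)]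

theorem mem_Gamma_Ytr_mul_iff (μ : P) (m l : ℤ) (lam : P) {wf : G}
    (hwf : ∀ (ν : P) (r : ℤ), C.ract wf (ν, r) = ((C.ract wf (ν, 0)).1, r))
    {ν : P} (hν : ν ∈ C.Φfin) (r j : ℤ) :
    (r, j) ∈ Gamma C ((μ, m, l), C.Ytr lam * wf) ν ↔
      ((0 < j ∨ (j = 0 ∧ 0 < r) ∨ (j = 0 ∧ r = 0 ∧ ν ∈ C.finPos)) ∧
       (j < -(C.pair μ ν) - l * r ∨
        (j = -(C.pair μ ν) - l * r ∧ r < -(C.pair lam ν)) ∨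
        (j = -(C.pair μ ν) - l * r ∧ r = -(C.pair lam ν) ∧
          -((C.ract wf⁻¹ (ν, 0)).1) ∈ C.finPos))) := by
  rw [C.mem_Gamma_iff _ _ hν, C.ract_Ytr_mul_inv hwf]
  have hj_lt : j + (C.pair μ ν + l * r) < 0 ↔ j < -C.pair μ ν - l * r := by omega
  have hj_eq : j + (C.pair μ ν + l * r) = 0 ↔ j = -C.pair μ ν - l * r := by omega
  have hr_lt : r + C.pair lam ν < 0 ↔ r < -C.pair lam ν := by omega
  have hr_eq : r + C.pair lam ν = 0 ↔ r = -C.pair lam ν := by omega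
  simp only [xpair, hj_lt, hj_eq, hr_lt, hr_eq]

end Ctx

theorem le_div_neg_of_mul_add_nonpos {l r p : ℤ} (hl : 0 < l) (h : l * r + p ≤ 0) :
    (r : ℚ) ≤ p / -(l : ℚ) := by
  have hl' : (0 : ℚ) < l := by exact_mod_cast hl
  have h' : (l : ℚ) * r + p ≤ 0 := by exact_mod_cast h
  rw [le_div_iff_of_neg (by linarith)]
  linarith

/-- explicit description of the lower graph `Γ_{x,ν}` for
`x = X^{μ + mδ + lΛ₀} Y^λ w`, together with the bounds on its lower and upper
outer edges. -/
theorem statement8 {P G : Type} [AddCommGroup P] [Group G] (C : Ctx P G)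
    (μ : P) (m l : ℤ) (hl : 0 < l)
    (lam : P) (wf : G)
    (hwf : ∀ (ν : P) (r : ℤ), C.ract wf (ν, r) = ((C.ract wf (ν, 0)).1, r))
    (g : G) (hg : g = C.Ytr lam * wf)
    (x : (P × ℤ × ℤ) × G) (hx : x = ((μ, m, l), g))
    (ν : P) (hν : ν ∈ C.Φfin) :
    (∀ r j : ℤ, (r, j) ∈ Gamma C x ν ↔
      ((0 < j ∨ (j = 0 ∧ 0 < r) ∨ (j = 0 ∧ r = 0 ∧ ν ∈ C.finPos)) ∧
       (j < -(C.pair μ ν) - l * r ∨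
        (j = -(C.pair μ ν) - l * r ∧ r < -(C.pair lam ν)) ∨
        (j = -(C.pair μ ν) - l * r ∧ r = -(C.pair lam ν) ∧
          -((C.ract wf⁻¹ (ν, 0)).1) ∈ C.finPos)))) ∧
    (∀ r : ℤ, (r, 0) ∈ Gamma C x ν →
      0 ≤ r ∧ (r : ℚ) ≤ (C.pair ν μ : ℚ) / (-(l : ℚ))) ∧
    (∀ r : ℤ, (r, -(C.pair μ ν) - l * r) ∈ Gamma C x ν →
      (r : ℚ) ≤ min ((C.pair ν μ : ℚ) / (-(l : ℚ))) ((-(C.pair lam ν) : ℤ) : ℚ)) := by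
  subst hg hx
  have hΓ := C.mem_Gamma_Ytr_mul_iff μ m l lam hwf hν
  refine ⟨hΓ, fun r hr => ?_, fun r hr => ?_⟩
  · obtain ⟨hpos, hneg⟩ := (hΓ r 0).1 hr
    have hr_nonneg : 0 ≤ r := by rcases hpos with h | ⟨-, h⟩ | ⟨-, h, -⟩ <;> omega
    have hedge : l * r + C.pair ν μ ≤ 0 := by
      rw [C.pair_symm]
      rcases hneg with h | ⟨h, -⟩ | ⟨h, -, -⟩ <;> omega
    exact ⟨hr_nonneg, le_div_neg_of_mul_add_nonpos hl hedge⟩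
  · obtain ⟨hpos, hneg⟩ := (hΓ r _).1 hr
    have hedge : l * r + C.pair ν μ ≤ 0 := by
      rw [C.pair_symm]
      rcases hpos with h | ⟨h, -⟩ | ⟨h, -, -⟩ <;> omega
    have hlam : r ≤ -C.pair lam ν := by rcases hneg with h | ⟨-, h⟩ | ⟨-, h, -⟩ <;> omega
    exact le_min (le_div_neg_of_mul_add_nonpos hl hedge) (by exact_mod_cast hlam)

end DoubleAffineBruhat
end

section
/- Let x ∈ W be of positive level and let α be a positive double affine root with x^{−1}(α) < 0. Then the map β ↦ −s_α(β) sends the length difference set L_{x,α} to itself, is an involution of L_{x,α}, and its only fixed point in L_{x,α} is α. Consequently, the elements of L_{x,α} other than α come in pairs {β, −s_α(β)} with β ≠ −s_α(β). -/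
/-!
Common framework for the double affine Weyl semigroup of Welch,
"Double Affine Bruhat Order".

Encoding conventions:
* `P` is the finite weight lattice `P_fin` (an additive abelian group) equipped with
  an integer-valued pairing `pair` (the normalized simply-laced pairing, identifying
  roots and coroots).
* A finite root is an element of the set `Φfin ⊆ P`; `finPos` is the set of
  positive finite roots.
* An affine root `ν + rδ` is encoded as the pair `(ν, r) : P × ℤ`.
* An affine weight `ζ = μ + mδ + lΛ₀ ∈ X` is encoded as `(μ, m, l) : P × ℤ × ℤ`.
* A double affine root `ν + rδ + jπ` is encoded as `(ν, r, j) : P × ℤ × ℤ`.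
* `G` is the affine Weyl group `W_aff` (an abstract group), acting on affine
  roots via `ract` and on `X` via `xact`; `saff α̃` is the reflection `s_{α̃}`,
  `Ytr λ` is the translation `Y^λ`.
* An element `X^ζ w̃` of the group `X ⋊ W_aff` (in particular of the double affine
  Weyl semigroup `W`, whose elements are those with `ζ` in the Tits cone) is encoded
  as the pair `(ζ, w̃) : (P × ℤ × ℤ) × G`.
-/

namespace DoubleAffineBruhat

variable {P G : Type} [AddCommGroup P] [Group G]

/-
The map `β ↦ -s_α(β)` is an involution because `s_α` is one and commutes with negation.
Since `s_α(-s_α β) = -β` and `x⁻¹(-s_α β) = -x⁻¹ s_α(β)`, it exchanges the conditions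
`β > 0` ↔ `s_α(β) < 0` and `x⁻¹(β) < 0` ↔ `x⁻¹ s_α(β) > 0` defining `L_{x,α}`.
A fixed point satisfies `s_α(β) = -β`, which for roots of norm 2 forces `β = ±α`;
positivity of `β` and `α` leaves `β = α`.
-/

namespace Ctx

variable (C : Ctx P G)

def pairRight (μ : P) : P →+ ℤ :=
  AddMonoidHom.mk' (C.pair μ) (C.pair_add_right μ)

lemma pair_neg_right (μ ν : P) : C.pair μ (-ν) = -C.pair μ ν :=
  map_neg (C.pairRight μ) ν

lemma pair_sub_right (μ ν γ : P) : C.pair μ (ν - γ) = C.pair μ ν - C.pair μ γ :=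
  map_sub (C.pairRight μ) ν γ

lemma pair_zsmul_right (μ : P) (n : ℤ) (ν : P) : C.pair μ (n • ν) = n * C.pair μ ν :=
  map_zsmul (C.pairRight μ) n ν

lemma pair_zsmul_left (n : ℤ) (ν μ : P) : C.pair (n • ν) μ = n * C.pair ν μ := by
  rw [C.pair_symm, pair_zsmul_right, C.pair_symm]

lemma eq_or_eq_neg_of_pair_mul_self {ν γ : P} (hν : ν ∈ C.Φfin) (hγ : γ ∈ C.Φfin)
    (h : C.pair ν γ * C.pair ν γ = 4) :
    (γ = ν ∧ C.pair ν γ = 2) ∨ (γ = -ν ∧ C.pair ν γ = -2) := by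
  have hc : (C.pair ν γ - 2) * (C.pair ν γ + 2) = 0 := by linear_combination h
  rcases mul_eq_zero.mp hc with hc | hc
  · exact .inl ⟨(C.pair_two_eq ν hν γ hγ (by linarith)).symm, by linarith⟩
  · refine .inr ⟨?_, by linarith⟩
    have hνγ := C.pair_two_eq ν hν (-γ) (C.root_neg γ hγ)
      (by rw [pair_neg_right]; linarith)
    rw [hνγ, neg_neg]

lemma dact_neg (z : (P × ℤ × ℤ) × G) (b : P × ℤ × ℤ) :
    dact C.pair C.ract z (-b) = -dact C.pair C.ract z b := by
  obtain ⟨γ, p, q⟩ := b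
  have hr : C.ract z.2 (-γ, -p) = -C.ract z.2 (γ, p) := C.ract_neg z.2 (γ, p)
  simp only [dact, xpair, Prod.fst_neg, Prod.snd_neg, hr, pair_neg_right, Prod.neg_mk,
    Prod.mk.injEq, true_and]
  ring

lemma dact_dref_involutive {a : P × ℤ × ℤ} (ha : a.1 ∈ C.Φfin) :
    Function.Involutive (dact C.pair C.ract (dref C.saff a)) := by
  rintro ⟨γ, p, q⟩
  obtain ⟨ν, r, j⟩ := a
  simp only [dact, dref, xpair, C.saff_act, pair_sub_right, pair_zsmul_right,
    pair_zsmul_left, C.pair_norm ν ha, Prod.mk.injEq]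
  refine ⟨?_, by ring, by ring⟩
  rw [show C.pair ν γ - C.pair ν γ * 2 = -C.pair ν γ by ring, neg_smul, sub_neg_eq_add,
    sub_add_cancel]

lemma dact_dref_self {a : P × ℤ × ℤ} (ha : a.1 ∈ C.Φfin) :
    dact C.pair C.ract (dref C.saff a) a = -a := by
  obtain ⟨ν, r, j⟩ := a
  simp only [dact, dref, xpair, C.saff_act, pair_sub_right, pair_zsmul_right,
    pair_zsmul_left, C.pair_norm ν ha, Prod.neg_mk, Prod.mk.injEq]
  refine ⟨?_, by ring, by ring⟩
  rw [two_zsmul]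
  abel

lemma eq_or_eq_neg_of_dact_dref_eq_neg {a b : P × ℤ × ℤ} (ha : a.1 ∈ C.Φfin)
    (hb : b.1 ∈ C.Φfin) (h : dact C.pair C.ract (dref C.saff a) b = -b) :
    b = a ∨ b = -a := by
  obtain ⟨ν, r, j⟩ := a
  obtain ⟨γ, p, q⟩ := b
  simp only [dact, dref, xpair, C.saff_act, pair_sub_right, pair_zsmul_right,
    pair_zsmul_left, C.pair_norm ν ha, Prod.neg_mk, Prod.mk.injEq] at h
  obtain ⟨hγ, hp, hq⟩ := h
  have hsq : C.pair ν γ * C.pair ν γ = 4 := by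
    have := congrArg (C.pair γ) hγ
    rw [pair_sub_right, pair_zsmul_right, pair_neg_right, C.pair_norm γ hb,
      C.pair_symm γ ν] at this
    linarith
  rcases C.eq_or_eq_neg_of_pair_mul_self ha hb hsq with ⟨rfl, hc⟩ | ⟨rfl, hc⟩
  · left
    rw [hc] at hp hq
    simp only [Prod.mk.injEq, true_and]
    omega
  · right
    rw [hc] at hp hq
    simp only [Prod.neg_mk, Prod.mk.injEq, true_and]
    omega

lemma not_dPos_neg {a : P × ℤ × ℤ} (ha : a.1 ∈ C.Φfin) (h : dPos C.finPos a) :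
    ¬dPos C.finPos (-a) := by
  obtain ⟨ν, r, j⟩ := a
  have hν := C.pos_trichotomy ν ha
  simp only [dPos, aPos, Prod.neg_mk, neg_neg] at h ⊢
  intro h'
  rcases h with ⟨hp, hj⟩ | ⟨hp, hj⟩ <;> rcases h' with ⟨hq, hk⟩ | ⟨hq, hk⟩ <;>
    rcases hp with hp | ⟨hp1, hp2⟩ <;> rcases hq with hq | ⟨hq1, hq2⟩ <;>
    first | omega | exact hν.mp hp2 hq2

lemma neg_dact_dref_mem_Ldiff {x : (P × ℤ × ℤ) × G} {a b : P × ℤ × ℤ}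
    (ha : a.1 ∈ C.Φfin) (hb : b ∈ Ldiff C x a) :
    -dact C.pair C.ract (dref C.saff a) b ∈ Ldiff C x a := by
  obtain ⟨hroot, hpos, hxneg, hsneg, hxspos⟩ := hb
  refine ⟨C.root_neg _ (C.ract_root _ (b.1, b.2.1) hroot), hsneg, ?_, ?_, ?_⟩
  · rwa [dact_neg, neg_neg]
  · rwa [dact_neg, neg_neg, C.dact_dref_involutive ha b]
  · rwa [dact_neg, C.dact_dref_involutive ha b, dact_neg]

lemma neg_dact_dref_eq_self_iff {a b : P × ℤ × ℤ} (ha : a.1 ∈ C.Φfin)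
    (hapos : dPos C.finPos a) (hb : b.1 ∈ C.Φfin) (hbpos : dPos C.finPos b) :
    -dact C.pair C.ract (dref C.saff a) b = b ↔ b = a := by
  constructor
  · intro h
    rcases C.eq_or_eq_neg_of_dact_dref_eq_neg ha hb (neg_eq_iff_eq_neg.mp h) with rfl | rfl
    · rfl
    · exact absurd hbpos (C.not_dPos_neg ha hapos)
  · rintro rfl
    rw [C.dact_dref_self ha, neg_neg]

end Ctx

theorem statement9_general {P G : Type} [AddCommGroup P] [Group G] (C : Ctx P G)
    (x : (P × ℤ × ℤ) × G) (a : P × ℤ × ℤ) (ha : a.1 ∈ C.Φfin) (hapos : dPos C.finPos a) :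
    (∀ b ∈ Ldiff C x a, -(dact C.pair C.ract (dref C.saff a) b) ∈ Ldiff C x a) ∧
    (∀ b ∈ Ldiff C x a,
      -(dact C.pair C.ract (dref C.saff a) (-(dact C.pair C.ract (dref C.saff a) b))) = b) ∧
    (∀ b ∈ Ldiff C x a, (-(dact C.pair C.ract (dref C.saff a) b) = b ↔ b = a)) ∧
    (∀ b ∈ Ldiff C x a, b ≠ a →
      -(dact C.pair C.ract (dref C.saff a) b) ∈ Ldiff C x a ∧
      -(dact C.pair C.ract (dref C.saff a) b) ≠ b) := by
  have hfix : ∀ b ∈ Ldiff C x a, -dact C.pair C.ract (dref C.saff a) b = b ↔ b = a :=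
    fun b hb => C.neg_dact_dref_eq_self_iff ha hapos hb.1 hb.2.1
  refine ⟨fun b hb => C.neg_dact_dref_mem_Ldiff ha hb, fun b _ => ?_, hfix,
    fun b hb hba => ⟨C.neg_dact_dref_mem_Ldiff ha hb, fun h => hba ((hfix b hb).mp h)⟩⟩
  rw [Ctx.dact_neg, neg_neg, C.dact_dref_involutive ha b]

/-- `β ↦ -s_α(β)` is an involution of the length difference set
`L_{x,α}` whose only fixed point is `α`; elements other than `α` come in pairs. -/
theorem statement9 {P G : Type} [AddCommGroup P] [Group G] (C : Ctx P G)
    (x : (P × ℤ × ℤ) × G) (hxW : x.1 ∈ Tits P) (hxl : 0 < level x.1)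
    (a : P × ℤ × ℤ) (ha : a.1 ∈ C.Φfin) (hapos : dPos C.finPos a)
    (haneg : dPos C.finPos (-(dact C.pair C.ract (dwinv C.xact x) a))) :
    (∀ b ∈ Ldiff C x a, -(dact C.pair C.ract (dref C.saff a) b) ∈ Ldiff C x a) ∧
    (∀ b ∈ Ldiff C x a,
      -(dact C.pair C.ract (dref C.saff a) (-(dact C.pair C.ract (dref C.saff a) b))) = b) ∧
    (∀ b ∈ Ldiff C x a, (-(dact C.pair C.ract (dref C.saff a) b) = b ↔ b = a)) ∧
    (∀ b ∈ Ldiff C x a, b ≠ a →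
      -(dact C.pair C.ract (dref C.saff a) b) ∈ Ldiff C x a ∧
      -(dact C.pair C.ract (dref C.saff a) b) ≠ b) :=
  statement9_general C x a ha hapos

end DoubleAffineBruhat
end

section
/- Let α = ν + rδ + jπ and β = ν + pδ + qπ be double affine roots with the same finite part ν ∈ Φ_fin. Then −s_α(β) = ν + (2r − p)δ + (2j − q)π; that is, −s_α(β) is the double affine root with finite part ν whose (δ, π)-coordinates are obtained by rotating the point (p, q) by 180 degrees about the point (r, j) in ℤ². -/
/-!
Common framework for the double affine Weyl semigroup of Welch,
"Double Affine Bruhat Order".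

Encoding conventions:
* `P` is the finite weight lattice `P_fin` (an additive abelian group) equipped with
  an integer-valued pairing `pair` (the normalized simply-laced pairing, identifying
  roots and coroots).
* A finite root is an element of the set `Φfin ⊆ P`; `finPos` is the set of
  positive finite roots.
* An affine root `ν + rδ` is encoded as the pair `(ν, r) : P × ℤ`.
* An affine weight `ζ = μ + mδ + lΛ₀ ∈ X` is encoded as `(μ, m, l) : P × ℤ × ℤ`.
* A double affine root `ν + rδ + jπ` is encoded as `(ν, r, j) : P × ℤ × ℤ`.
* `G` is the affine Weyl group `W_aff` (an abstract group), acting on affine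
  roots via `ract` and on `X` via `xact`; `saff α̃` is the reflection `s_{α̃}`,
  `Ytr λ` is the translation `Y^λ`.
* An element `X^ζ w̃` of the group `X ⋊ W_aff` (in particular of the double affine
  Weyl semigroup `W`, whose elements are those with `ζ` in the Tits cone) is encoded
  as the pair `(ζ, w̃) : (P × ℤ × ℤ) × G`.
-/

namespace DoubleAffineBruhat

variable {P G : Type} [AddCommGroup P] [Group G]

/-- The reflection formula `s_α(β) = β - ⟨α̃, β̃⟩ α`, in coordinates. -/
theorem dact_dref {P G : Type} [AddCommGroup P]
    {pair : P → P → ℤ} {ract : G → P × ℤ → P × ℤ} {saff : P × ℤ → G}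
    (hadd2 : ∀ μ ν γ, pair μ (ν + γ) = pair μ ν + pair μ γ)
    (hsmul1 : ∀ (c : ℤ) (μ ν : P), pair (c • μ) ν = c * pair μ ν)
    (hsmul2 : ∀ (c : ℤ) (μ ν : P), pair μ (c • ν) = c * pair μ ν)
    (hsaff : ∀ (ν : P) (r : ℤ) (γ : P) (p : ℤ),
      ract (saff (ν, r)) (γ, p) = (γ - pair ν γ • ν, p - r * pair ν γ))
    {ν : P} (hν : pair ν ν = 2) (r j : ℤ) (γ : P) (p q : ℤ) :
    dact pair ract (dref saff (ν, r, j)) (γ, p, q) =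
      (γ - pair ν γ • ν, p - r * pair ν γ, q - j * pair ν γ) := by
  have hpair : pair ((-j) • ν) (γ - pair ν γ • ν) = j * pair ν γ := by
    rw [sub_eq_add_neg, ← neg_smul, hsmul1, hadd2, hsmul2, hν]
    ring
  simp only [dact, dref, xpair, hsaff, hpair, zero_mul, add_zero]

theorem statement17_general {P G : Type} [AddCommGroup P]
    (pair : P → P → ℤ) (Φfin : Set P)
    (hadd2 : ∀ μ ν γ, pair μ (ν + γ) = pair μ ν + pair μ γ)
    (hsmul1 : ∀ (c : ℤ) (μ ν : P), pair (c • μ) ν = c * pair μ ν)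
    (hsmul2 : ∀ (c : ℤ) (μ ν : P), pair μ (c • ν) = c * pair μ ν)
    (hnorm : ∀ ν ∈ Φfin, pair ν ν = 2)
    (ract : G → P × ℤ → P × ℤ) (saff : P × ℤ → G)
    (hsaff : ∀ (ν : P) (r : ℤ) (γ : P) (p : ℤ),
      ract (saff (ν, r)) (γ, p) = (γ - pair ν γ • ν, p - r * pair ν γ))
    (ν : P) (r p j q : ℤ) (hν : ν ∈ Φfin)
    (a b : P × ℤ × ℤ) (ha : a = (ν, r, j)) (hb : b = (ν, p, q)) :
    -(dact pair ract (dref saff a) b) = (ν, 2 * r - p, 2 * j - q) := by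
  subst ha hb
  rw [dact_dref hadd2 hsmul1 hsmul2 hsaff (hnorm ν hν), hnorm ν hν]
  ext <;> simp only [Prod.fst_neg, Prod.snd_neg]
  · rw [two_smul]; abel
  · ring
  · ring

/-- for `α = ν + rδ + jπ` and `β = ν + pδ + qπ` with the same finite
part, `-s_α(β) = ν + (2r - p)δ + (2j - q)π`, i.e. the 180° rotation of `(p,q)`
about `(r,j)`. -/
theorem statement17 {P G : Type} [AddCommGroup P] [Group G]
    (pair : P → P → ℤ) (Φfin : Set P)
    (hadd1 : ∀ μ ν γ, pair (μ + ν) γ = pair μ γ + pair ν γ)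
    (hadd2 : ∀ μ ν γ, pair μ (ν + γ) = pair μ ν + pair μ γ)
    (hsmul1 : ∀ (c : ℤ) (μ ν : P), pair (c • μ) ν = c * pair μ ν)
    (hsmul2 : ∀ (c : ℤ) (μ ν : P), pair μ (c • ν) = c * pair μ ν)
    (hnorm : ∀ ν ∈ Φfin, pair ν ν = 2)
    (ract : G → P × ℤ → P × ℤ) (saff : P × ℤ → G)
    (hsaff : ∀ (ν : P) (r : ℤ) (γ : P) (p : ℤ),
      ract (saff (ν, r)) (γ, p) = (γ - pair ν γ • ν, p - r * pair ν γ))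
    (ν : P) (r p j q : ℤ) (hν : ν ∈ Φfin)
    (a b : P × ℤ × ℤ) (ha : a = (ν, r, j)) (hb : b = (ν, p, q)) :
    -(dact pair ract (dref saff a) b) = (ν, 2 * r - p, 2 * j - q) :=
  statement17_general pair Φfin hadd2 hsmul1 hsmul2 hnorm ract saff hsaff ν r p j q hν a b ha hb

end DoubleAffineBruhat
end
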